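/- Let p ≥ 3 be an integer and E_∞ = 2√((p-1)/p). Suppose y ≥ √((p-1)/p) satisfies ((py²-1)/(py))²·y + (py²-1)/(py) = y·log(py²), and set γ = y + (p-1)/(py). Then Θ_{0,p}(-γ) = 0, where Θ_{0,p}(u) = (1/2)log(p-1) - ((p-2)/(4(p-1)))u² - I₁(u) for u ≤ -E_∞ and I₁(u) = -(u/E_∞²)√(u²-E_∞²) - log(-u + √(u²-E_∞²)) + log E_∞. -/

import Mathlib

open Real

noncomputable def Einf (p : ℕ) : ℝ := 2 * Real.sqrt ((p - 1) / p)

noncomputable def rateI1 (p : ℕ) (u : ℝ) : ℝ :=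
  -(u / (Einf p) ^ 2) * Real.sqrt (u ^ 2 - (Einf p) ^ 2)
    - Real.log (-u + Real.sqrt (u ^ 2 - (Einf p) ^ 2)) + Real.log (Einf p)

/-- `Θ_{0,p}(u)` for `u ≤ -E_∞`. -/
noncomputable def Theta0 (p : ℕ) (u : ℝ) : ℝ :=
  (1 / 2) * Real.log (p - 1) - ((p - 2) / (4 * (p - 1))) * u ^ 2 - rateI1 p u

theorem stmt8 (p : ℕ) (hp : 3 ≤ p) (y : ℝ)
    (hy : Real.sqrt (((p : ℝ) - 1) / p) ≤ y)
    (heq : (((p : ℝ) * y ^ 2 - 1) / (p * y)) ^ 2 * y + ((p : ℝ) * y ^ 2 - 1) / (p * y)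
      = y * Real.log (p * y ^ 2))
    (γ : ℝ) (hγ : γ = y + ((p : ℝ) - 1) / (p * y)) :
    Theta0 p (-γ) = 0 := by
  have hp3 : (3:ℝ) ≤ (p:ℝ) := by exact_mod_cast hp
  have hp0 : (0:ℝ) < (p:ℝ) := by linarith
  have hp1 : (0:ℝ) < (p:ℝ) - 1 := by linarith
  have ha0 : (0:ℝ) < ((p:ℝ) - 1) / p := div_pos hp1 hp0
  have hy0 : (0:ℝ) < y := lt_of_lt_of_le (Real.sqrt_pos.mpr ha0) hy
  have hy2 : ((p:ℝ) - 1) / p ≤ y ^ 2 := by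
    nlinarith [Real.sq_sqrt ha0.le, Real.sqrt_nonneg (((p:ℝ) - 1) / p)]
  have hγ' : γ = y + (((p:ℝ) - 1) / p) / y := by
    rw [hγ, div_div]
  have hE2 : (Einf p) ^ 2 = 4 * (((p:ℝ) - 1) / p) := by
    rw [Einf, mul_pow, Real.sq_sqrt ha0.le]; ring
  have hge : 0 ≤ y - (((p:ℝ) - 1) / p) / y := by
    rw [sub_nonneg, div_le_iff₀ hy0]; nlinarith
  have hsq : (-γ) ^ 2 - (Einf p) ^ 2 = (y - (((p:ℝ) - 1) / p) / y) ^ 2 := by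
    rw [hE2, hγ']; field_simp; ring
  have hroot : Real.sqrt ((-γ) ^ 2 - (Einf p) ^ 2) = y - (((p:ℝ) - 1) / p) / y := by
    rw [hsq, Real.sqrt_sq hge]
  have h2y : -(-γ) + Real.sqrt ((-γ) ^ 2 - (Einf p) ^ 2) = 2 * y := by
    rw [hroot, hγ']; ring
  -- log lemmas
  have hlogp1 : Real.log ((p:ℝ) - 1) = Real.log (p:ℝ) + Real.log (((p:ℝ) - 1) / p) := by
    rw [Real.log_div hp1.ne' hp0.ne']; ring
  have hlogE : Real.log (Einf p) = Real.log 2 + Real.log (((p:ℝ) - 1) / p) / 2 := by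
    rw [Einf, Real.log_mul two_ne_zero (Real.sqrt_pos.mpr ha0).ne', Real.log_sqrt ha0.le]
  have hlog2y : Real.log (2 * y) = Real.log 2 + Real.log y :=
    Real.log_mul two_ne_zero hy0.ne'
  -- the constraint, rewritten
  have h1 : Real.log ((p:ℝ) * y ^ 2) = Real.log (p:ℝ) + 2 * Real.log y := by
    rw [Real.log_mul hp0.ne' (by positivity), Real.log_pow]; push_cast; ring
  have hconstr : Real.log (p:ℝ) =
      ((((p:ℝ) * y ^ 2 - 1) / (p * y)) ^ 2 * y + ((p:ℝ) * y ^ 2 - 1) / (p * y)) / y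
        - 2 * Real.log y := by
    rw [heq, h1]
    field_simp
    ring
  rw [Theta0, rateI1, h2y, hroot, hE2, hlogp1, hlogE, hlog2y, hconstr, hγ']
  have hpy : (p:ℝ) * y ≠ 0 := by positivity
  field_simp
  ring
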